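/- Let M₁ be compact with volume form dv₁, let (hₛ) be a measure-preserving flow on M₁, and for q ∈ M₁, a > 0 let γ_{q,a}(s) = hₛ(q) for s ∈ [-a,a]. If σ : M₁ → [0,∞) is measurable and ∫_{-a}^{a} σ(γ_{q,a}(s)) ds ≥ 1 for all q, then vol(M₁)/(2a)⁴ ≤ ∫_{M₁} σ⁴ dv₁. Consequently, if each γ_{q,a} has unit speed (so that admissibility is the above condition), the modulus of the family Γ_a = {γ_{q,a} : q ∈ M₁} equals (1/(2a))⁴ vol(M₁). -/

import Mathlib

open MeasureTheory
open scoped ENNReal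

lemma holder_pow4 {α : Type*} [MeasurableSpace α] (ν : Measure α) (f : α → ℝ≥0∞)
    (hf : AEMeasurable f ν) :
    (∫⁻ x, f x ∂ν) ^ 4 ≤ (ν Set.univ) ^ 3 * ∫⁻ x, f x ^ 4 ∂ν := by
  have hpq : (4 : ℝ).HolderConjugate (4 / 3) := by
    exact (Real.holderConjugate_iff_eq_conjExponent (by norm_num)).2 (by norm_num)
  have H := ENNReal.lintegral_mul_le_Lp_mul_Lq ν hpq hf aemeasurable_const (g := fun _ => 1)
  simp only [Pi.mul_apply, mul_one, ENNReal.one_rpow, lintegral_const, one_mul] at H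
  have key : ∫⁻ x, f x ∂ν ≤ (∫⁻ x, f x ^ (4 : ℝ) ∂ν) ^ ((1 : ℝ) / 4) *
      (ν Set.univ) ^ ((3 : ℝ) / 4) := by
    calc ∫⁻ x, f x ∂ν ≤ (∫⁻ x, f x ^ (4:ℝ) ∂ν) ^ ((1:ℝ)/4) * (ν Set.univ) ^ ((1:ℝ) / (4/3)) := H
    _ = _ := by norm_num
  calc (∫⁻ x, f x ∂ν) ^ 4
      ≤ ((∫⁻ x, f x ^ (4 : ℝ) ∂ν) ^ ((1 : ℝ) / 4) * (ν Set.univ) ^ ((3 : ℝ) / 4)) ^ 4 :=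
        pow_le_pow_left' key 4
    _ = (∫⁻ x, f x ^ (4 : ℝ) ∂ν) * (ν Set.univ) ^ (3 : ℝ) := by
        rw [mul_pow, ← ENNReal.rpow_natCast (_ ^ ((1:ℝ)/4)) 4,
          ← ENNReal.rpow_natCast (_ ^ ((3:ℝ)/4)) 4, ← ENNReal.rpow_mul, ← ENNReal.rpow_mul]
        norm_num
    _ = (ν Set.univ) ^ 3 * ∫⁻ x, f x ^ 4 ∂ν := by
        rw [mul_comm]
        congr 1
        · rw [← ENNReal.rpow_natCast (ν Set.univ) 3]; norm_num
        · refine lintegral_congr fun x => ?_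
          rw [← ENNReal.rpow_natCast (f x) 4]; norm_num

/-- Let `(hₛ)` be a measure-preserving flow on a finite measure space `M₁`, and
let `Γ_a` be the family of unit-speed flow segments `γ_{q,a} : s ↦ hₛ(q)`,
`s ∈ [-a,a]`. If `σ ≥ 0` is measurable with `∫_{-a}^a σ(hₛ q) ds ≥ 1` for all
`q`, then `vol(M₁)/(2a)⁴ ≤ ∫ σ⁴`; consequently the modulus of `Γ_a` equals
`(1/(2a))⁴ vol(M₁)`. -/
theorem modulus_of_flow_segments
    (M : Type*) [MeasurableSpace M] (μ : Measure M) [IsFiniteMeasure μ]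
    (h : ℝ → M → M)
    (hmeas : Measurable fun p : ℝ × M => h p.1 p.2)
    (hflow0 : ∀ q, h 0 q = q)
    (hflow : ∀ s t q, h (s + t) q = h s (h t q))
    (hpres : ∀ s, MeasurePreserving (h s) μ μ)
    (a : ℝ) (ha : 0 < a) :
    (∀ σ : M → ℝ≥0∞, Measurable σ →
      (∀ q, 1 ≤ ∫⁻ s in Set.Icc (-a) a, σ (h s q)) →
      μ Set.univ / (ENNReal.ofReal (2 * a)) ^ 4 ≤ ∫⁻ x, (σ x) ^ 4 ∂μ) ∧
    sInf {v : ℝ≥0∞ | ∃ σ : M → ℝ≥0∞, Measurable σ ∧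
        (∀ q, 1 ≤ ∫⁻ s in Set.Icc (-a) a, σ (h s q)) ∧
        v = ∫⁻ x, (σ x) ^ 4 ∂μ} =
      ((ENNReal.ofReal (2 * a))⁻¹) ^ 4 * μ Set.univ := by
  have h2a : (0:ℝ) < 2 * a := by linarith
  have hvol : (volume (Set.Icc (-a) a)) = ENNReal.ofReal (2 * a) := by
    rw [Real.volume_Icc]; ring_nf
  have hne0 : ENNReal.ofReal (2 * a) ≠ 0 := by
    simp [ENNReal.ofReal_eq_zero, not_le, h2a, ha]
  have hnetop : ENNReal.ofReal (2 * a) ≠ ⊤ := ENNReal.ofReal_ne_top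
  have main : ∀ σ : M → ℝ≥0∞, Measurable σ →
      (∀ q, 1 ≤ ∫⁻ s in Set.Icc (-a) a, σ (h s q)) →
      μ Set.univ / (ENNReal.ofReal (2 * a)) ^ 4 ≤ ∫⁻ x, (σ x) ^ 4 ∂μ := by
    intro σ hσ hadm
    -- pointwise Hölder
    have hptwise : ∀ q, (1 : ℝ≥0∞) ≤
        (ENNReal.ofReal (2 * a)) ^ 3 * ∫⁻ s in Set.Icc (-a) a, (σ (h s q)) ^ 4 := by
      intro q
      have hmf : AEMeasurable (fun s => σ (h s q)) (volume.restrict (Set.Icc (-a) a)) := by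
        exact ((hσ.comp (hmeas.comp (measurable_id.prodMk measurable_const)))).aemeasurable
      have := holder_pow4 (volume.restrict (Set.Icc (-a) a)) _ hmf
      calc (1 : ℝ≥0∞) = 1 ^ 4 := (one_pow 4).symm
        _ ≤ (∫⁻ s in Set.Icc (-a) a, σ (h s q)) ^ 4 := pow_le_pow_left' (hadm q) 4
        _ ≤ (volume.restrict (Set.Icc (-a) a) Set.univ) ^ 3 *
            ∫⁻ s in Set.Icc (-a) a, (σ (h s q)) ^ 4 := this
        _ = _ := by rw [Measure.restrict_apply_univ, hvol]
    -- integrate over q and use Tonelli + measure preservation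
    have hint : μ Set.univ ≤
        (ENNReal.ofReal (2 * a)) ^ 3 *
          ∫⁻ q, ∫⁻ s in Set.Icc (-a) a, (σ (h s q)) ^ 4 ∂volume ∂μ := by
      calc μ Set.univ = ∫⁻ _, 1 ∂μ := by simp
        _ ≤ ∫⁻ q, (ENNReal.ofReal (2 * a)) ^ 3 *
            ∫⁻ s in Set.Icc (-a) a, (σ (h s q)) ^ 4 ∂volume ∂μ := lintegral_mono hptwise
        _ = _ := by rw [lintegral_const_mul]
                    exact (Measurable.lintegral_prod_left
                      (((hσ.comp hmeas).pow_const 4)))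
    have hswap : ∫⁻ q, ∫⁻ s in Set.Icc (-a) a, (σ (h s q)) ^ 4 ∂volume ∂μ
        = ∫⁻ s in Set.Icc (-a) a, ∫⁻ q, (σ (h s q)) ^ 4 ∂μ ∂volume := by
      apply lintegral_lintegral_swap
      exact (((hσ.comp hmeas).pow_const 4).comp measurable_swap).aemeasurable
    have hinner : ∀ s : ℝ, ∫⁻ q, (σ (h s q)) ^ 4 ∂μ = ∫⁻ x, (σ x) ^ 4 ∂μ := by
      intro s
      exact (hpres s).lintegral_comp (hσ.pow_const 4)
    have htotal : μ Set.univ ≤ (ENNReal.ofReal (2 * a)) ^ 4 * ∫⁻ x, (σ x) ^ 4 ∂μ := by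
      calc μ Set.univ ≤ (ENNReal.ofReal (2 * a)) ^ 3 *
          ∫⁻ q, ∫⁻ s in Set.Icc (-a) a, (σ (h s q)) ^ 4 ∂volume ∂μ := hint
        _ = (ENNReal.ofReal (2 * a)) ^ 3 *
            ∫⁻ s in Set.Icc (-a) a, ∫⁻ q, (σ (h s q)) ^ 4 ∂μ ∂volume := by rw [hswap]
        _ = (ENNReal.ofReal (2 * a)) ^ 3 *
            (ENNReal.ofReal (2 * a) * ∫⁻ x, (σ x) ^ 4 ∂μ) := by
            rw [lintegral_congr hinner, lintegral_const, Measure.restrict_apply_univ, hvol,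
              mul_comm (∫⁻ x, (σ x) ^ 4 ∂μ)]
        _ = (ENNReal.ofReal (2 * a)) ^ 4 * ∫⁻ x, (σ x) ^ 4 ∂μ := by ring
    rw [ENNReal.div_le_iff (pow_ne_zero 4 hne0) (ENNReal.pow_ne_top hnetop)]
    rwa [mul_comm] at htotal
  refine ⟨main, ?_⟩
  apply le_antisymm
  · -- constant competitor
    refine sInf_le ⟨fun _ => (ENNReal.ofReal (2 * a))⁻¹, measurable_const, ?_, ?_⟩
    · intro q
      rw [lintegral_const, Measure.restrict_apply_univ, hvol,
        ENNReal.inv_mul_cancel hne0 hnetop]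
    · rw [lintegral_const]
  · apply le_sInf
    rintro v ⟨σ, hσ, hadm, rfl⟩
    calc ((ENNReal.ofReal (2 * a))⁻¹) ^ 4 * μ Set.univ
        = μ Set.univ / (ENNReal.ofReal (2 * a)) ^ 4 := by
          rw [ENNReal.div_eq_inv_mul, ENNReal.inv_pow]
      _ ≤ _ := main σ hσ hadm
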